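/- Let V be a variety of τ-algebras and let B be a subfamily of Con(F^V) closed under inverse substitution. Then B^{K^B} = B; that is, for every l ≥ 1, every congruence θ ∈ Con(F_l^V) with F_l^V/θ isomorphic to F_k^V/ψ for some k ≥ 1 and ψ ∈ B_k already belongs to B_l. -/

import Mathlib

/-! Universal-algebra preamble: functional signatures, algebras (with nonempty
carriers, as usual in universal algebra), terms, homomorphisms, congruences,
quotients, free algebras, and the operators/uniformities of the paper.

Families indexed over the components of a clone are indexed by `k : ℕ`, where
index `k` stands for the component of arity `k + 1` (so all arities `≥ 1`). -/

/-- A functional signature: a type of function symbols together with arities. -/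
structure Signature : Type 1 where
  F : Type
  arity : F → ℕ

/-- A τ-algebra: a nonempty carrier together with an interpretation of each symbol. -/
structure Alg (σ : Signature) : Type 1 where
  carrier : Type
  nonempty : Nonempty carrier
  op : ∀ f : σ.F, (Fin (σ.arity f) → carrier) → carrier

/-- Abstract τ-terms over the variables x_1, …, x_n. -/
inductive Trm (σ : Signature) (n : ℕ) : Type
  | var : Fin n → Trm σ n
  | app : ∀ f : σ.F, (Fin (σ.arity f) → Trm σ n) → Trm σ n

variable {σ : Signature}

/-- Evaluation of a term in an algebra under a valuation of the variables. -/
def Trm.eval {n : ℕ} (A : Alg σ) (v : Fin n → A.carrier) : Trm σ n → A.carrier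
  | .var i => v i
  | .app f ts => A.op f fun i => Trm.eval A v (ts i)

/-- The term operation `t^A` induced on `A` by the term `t`. -/
def termOp {n : ℕ} (A : Alg σ) (t : Trm σ n) : (Fin n → A.carrier) → A.carrier :=
  fun v => t.eval A v

/-- Homomorphisms of τ-algebras. -/
def IsHom (A B : Alg σ) (h : A.carrier → B.carrier) : Prop :=
  ∀ (f : σ.F) (x : Fin (σ.arity f) → A.carrier), h (A.op f x) = B.op f fun i => h (x i)

/-- Isomorphism of τ-algebras. -/
def Isomorphic (A B : Alg σ) : Prop :=
  ∃ h : A.carrier → B.carrier, IsHom A B h ∧ Function.Bijective h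

/-- Membership in the subuniverse generated by `S`. -/
inductive InClosure (A : Alg σ) (S : Set A.carrier) : A.carrier → Prop
  | base : ∀ a ∈ S, InClosure A S a
  | app : ∀ (f : σ.F) (x : Fin (σ.arity f) → A.carrier),
      (∀ i, InClosure A S (x i)) → InClosure A S (A.op f x)

/-- An algebra is finitely generated if a finite subset generates it. -/
def FinGen (A : Alg σ) : Prop :=
  ∃ S : Set A.carrier, S.Finite ∧ ∀ a, InClosure A S a

/-- Product of a family of algebras. -/
def PiAlg {ι : Type} (A : ι → Alg σ) : Alg σ where
  carrier := ∀ i, (A i).carrier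
  nonempty := ⟨fun i => Classical.choice (A i).nonempty⟩
  op f x := fun i => (A i).op f fun j => x j i

/-- A congruence: an equivalence relation compatible with all operations. -/
def IsCongruence (A : Alg σ) (r : A.carrier → A.carrier → Prop) : Prop :=
  Equivalence r ∧ ∀ (f : σ.F) (x y : Fin (σ.arity f) → A.carrier),
    (∀ i, r (x i) (y i)) → r (A.op f x) (A.op f y)

/-- Bundled congruences on an algebra. -/
structure Cong (A : Alg σ) : Type where
  r : A.carrier → A.carrier → Prop
  iscon : IsCongruence A r

/-- The quotient algebra of `A` by (a relation which is intended to be) a congruence. -/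
noncomputable def quotAlg (A : Alg σ) (r : A.carrier → A.carrier → Prop) : Alg σ where
  carrier := Quot r
  nonempty := ⟨Quot.mk r (Classical.choice A.nonempty)⟩
  op f x := Quot.mk r (A.op f fun i => (x i).out)

/-- The subalgebra of `A` on a nonempty subset closed under the operations. -/
def subAlg (A : Alg σ) (S : Set A.carrier) (hne : S.Nonempty)
    (hcl : ∀ (f : σ.F) (x : Fin (σ.arity f) → A.carrier), (∀ i, x i ∈ S) → A.op f x ∈ S) :
    Alg σ where
  carrier := {a : A.carrier // a ∈ S}
  nonempty := ⟨⟨hne.choose, hne.choose_spec⟩⟩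
  op f x := ⟨A.op f fun i => (x i).1, hcl f _ fun i => (x i).2⟩

/-- The subalgebra of `A` generated by a nonempty subset `S`. -/
def genSubAlg (A : Alg σ) (S : Set A.carrier) (hne : S.Nonempty) : Alg σ where
  carrier := {a : A.carrier // InClosure A S a}
  nonempty := ⟨⟨hne.choose, InClosure.base _ hne.choose_spec⟩⟩
  op f x := ⟨A.op f fun i => (x i).1, InClosure.app f _ fun i => (x i).2⟩

/-- H: homomorphic images of members of `K`. -/
def Hcl (K : Set (Alg σ)) : Set (Alg σ) :=
  {B | ∃ A ∈ K, ∃ h : A.carrier → B.carrier, IsHom A B h ∧ Function.Surjective h}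

/-- I: isomorphic copies of members of `K`. -/
def Icl (K : Set (Alg σ)) : Set (Alg σ) := {B | ∃ A ∈ K, Isomorphic A B}

/-- S: isomorphic copies of subalgebras (i.e. algebras embedding into members) of `K`. -/
def Scl (K : Set (Alg σ)) : Set (Alg σ) :=
  {B | ∃ A ∈ K, ∃ e : B.carrier → A.carrier, IsHom B A e ∧ Function.Injective e}

/-- P_f: isomorphic copies of finite (nonempty) products of members of `K`. -/
def Pfcl (K : Set (Alg σ)) : Set (Alg σ) :=
  {B | ∃ (n : ℕ) (A : Fin (n + 1) → Alg σ), (∀ i, A i ∈ K) ∧ Isomorphic (PiAlg A) B}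

/-- S_f: isomorphic copies of finitely generated subalgebras of members of `K`. -/
def Sf (K : Set (Alg σ)) : Set (Alg σ) :=
  {B | FinGen B ∧ ∃ A ∈ K, ∃ e : B.carrier → A.carrier, IsHom B A e ∧ Function.Injective e}

/-- S P_f: isomorphic copies of finitely generated subalgebras of finite products
of members of `K`. -/
def SPf (K : Set (Alg σ)) : Set (Alg σ) :=
  {B | FinGen B ∧ ∃ (n : ℕ) (A : Fin (n + 1) → Alg σ), (∀ i, A i ∈ K) ∧
    ∃ e : B.carrier → (PiAlg A).carrier, IsHom B (PiAlg A) e ∧ Function.Injective e}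

/-- A pseudovariety of finitely generated algebras: a class of finitely generated
algebras closed under homomorphic images and under isomorphic copies of finitely
generated subalgebras of finite products of its members. -/
def IsPseudovarietyFG (C : Set (Alg σ)) : Prop :=
  (∀ A ∈ C, FinGen A) ∧ Hcl C ⊆ C ∧ SPf C ⊆ C

/-- A pseudovariety of finite algebras: a class of finite algebras closed under
finite products, subalgebras and homomorphic images. -/
def IsPseudovarietyFin (C : Set (Alg σ)) : Prop :=
  (∀ A ∈ C, Finite A.carrier) ∧ Hcl C ⊆ C ∧ Scl C ⊆ C ∧ Pfcl C ⊆ C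

/-- A variety: a class closed under arbitrary products, subalgebras and
homomorphic images. -/
def IsVariety (V : Set (Alg σ)) : Prop :=
  (∀ (ι : Type) (A : ι → Alg σ), (∀ i, A i ∈ V) → PiAlg A ∈ V) ∧
  Scl V ⊆ V ∧ Hcl V ⊆ V

/-- The identities of the class `C`: `s` and `t` are identified iff they induce the
same operation on every member of `C`. -/
def FreeCon (C : Set (Alg σ)) (n : ℕ) : Trm σ n → Trm σ n → Prop :=
  fun s t => ∀ A ∈ C, ∀ v : Fin n → A.carrier, s.eval A v = t.eval A v

/-- `freeAlg C k` is `F_{k+1}^C`, the free algebra for `C` on `k + 1` generators: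
the term algebra on the variables `x_1, …, x_{k+1}` modulo the identities of `C`.
(The index `k` stands for arity `k + 1`, so all components have arity `≥ 1`.) -/
noncomputable def freeAlg (C : Set (Alg σ)) (k : ℕ) : Alg σ where
  carrier := Quot (FreeCon C (k + 1))
  nonempty := ⟨Quot.mk _ (Trm.var 0)⟩
  op f x := Quot.mk _ (Trm.app f fun i => (x i).out)

/-- The finitely generated members of `V`. -/
def Vfg (V : Set (Alg σ)) : Set (Alg σ) := {A | A ∈ V ∧ FinGen A}

/-- `B^K`: the congruences of the free algebras whose quotient is isomorphic to a
member of `K`. -/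
def BK (V K : Set (Alg σ)) (k : ℕ) : Set (Cong (freeAlg V k)) :=
  {θ | quotAlg (freeAlg V k) θ.r ∈ Icl K}

/-- `K^B`: isomorphic copies of the quotients of free algebras by congruences in `B`. -/
def KB (V : Set (Alg σ)) (B : ∀ k : ℕ, Set (Cong (freeAlg V k))) : Set (Alg σ) :=
  Icl {A | ∃ (k : ℕ), ∃ θ ∈ B k, A = quotAlg (freeAlg V k) θ.r}

/-- `θ/t̄`: the inverse substitution of the congruence `θ` along the tuple `t̄`;
`s (θ/t̄) s'` iff `s(t₁,…,t_m) θ s'(t₁,…,t_m)`. -/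
noncomputable def conSubstRel {V : Set (Alg σ)} {k : ℕ} (θ : Cong (freeAlg V k)) {m : ℕ}
    (t : Fin (m + 1) → (freeAlg V k).carrier) :
    (freeAlg V m).carrier → (freeAlg V m).carrier → Prop :=
  fun s s' => θ.r (Trm.eval (freeAlg V k) t s.out) (Trm.eval (freeAlg V k) t s'.out)

/-- A family of congruences is closed under inverse substitution. -/
def InvSubstClosed (V : Set (Alg σ)) (B : ∀ k : ℕ, Set (Cong (freeAlg V k))) : Prop :=
  ∀ (k m : ℕ), ∀ θ ∈ B k, ∀ t : Fin (m + 1) → (freeAlg V k).carrier,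
    ∃ θ' ∈ B m, θ'.r = conSubstRel θ t

/-- A family of congruences is closed under finite intersections (componentwise). -/
def InterClosed (V : Set (Alg σ)) (B : ∀ k : ℕ, Set (Cong (freeAlg V k))) : Prop :=
  ∀ (k n : ℕ) (θs : Fin (n + 1) → Cong (freeAlg V k)), (∀ i, θs i ∈ B k) →
    ∃ θ' ∈ B k, θ'.r = fun a b => ∀ i, (θs i).r a b

/-- A family of congruences is upward closed (componentwise). -/
def UpClosed (V : Set (Alg σ)) (B : ∀ k : ℕ, Set (Cong (freeAlg V k))) : Prop :=
  ∀ (k : ℕ), ∀ θ ∈ B k, ∀ ψ : Cong (freeAlg V k), (∀ a b, θ.r a b → ψ.r a b) → ψ ∈ B k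

/-- A filter on `X × X` is a uniformity: every entourage contains the diagonal, the
converse of an entourage is an entourage, and the generalised triangle inequality. -/
def IsUniformity {X : Type} (u : Filter (X × X)) : Prop :=
  (∀ U ∈ u, ∀ x : X, (x, x) ∈ U) ∧
  (∀ U ∈ u, {p : X × X | (p.2, p.1) ∈ U} ∈ u) ∧
  (∀ U ∈ u, ∃ W ∈ u, ∀ x y z : X, (x, y) ∈ W → (y, z) ∈ W → (x, z) ∈ U)

/-- `U^C` (the component of index `k`, i.e. of arity `k + 1`): the filter on
`F_{k+1}^V × F_{k+1}^V` generated by the congruences `θ` of `F_{k+1}^V` such that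
`F_{k+1}^V/θ` is isomorphic to a member of `C`. -/
noncomputable def unifC (V C : Set (Alg σ)) (k : ℕ) :
    Filter ((freeAlg V k).carrier × (freeAlg V k).carrier) :=
  Filter.generate
    {U | ∃ θ : Cong (freeAlg V k), quotAlg (freeAlg V k) θ.r ∈ Icl C ∧ U = {p | θ.r p.1 p.2}}

/-- The `(k+1)`-ary part of `Clo(A)`: the `(k+1)`-ary term operations of `A`. -/
def CloK (A : Alg σ) (k : ℕ) : Type :=
  {g : (Fin (k + 1) → A.carrier) → A.carrier // ∃ t : Trm σ (k + 1), g = termOp A t}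

/-- The uniformity of pointwise convergence on the `(k+1)`-ary part of `Clo(A)`:
generated by the sets `U_ā = {(f, g) | f(ā) = g(ā)}`. -/
noncomputable def ptwUnif (A : Alg σ) (k : ℕ) : Filter (CloK A k × CloK A k) :=
  Filter.generate {U | ∃ a : Fin (k + 1) → A.carrier, U = {p | p.1.1 a = p.2.1 a}}

/-- The natural map from the free algebra for `C` onto `Clo(A)`, sending the class
of a term `t` to the term operation `t^A`. -/
noncomputable def natMap (C : Set (Alg σ)) (A : Alg σ) (k : ℕ) :
    (freeAlg C k).carrier → CloK A k :=
  fun q => ⟨termOp A q.out, q.out, rfl⟩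

/-- The natural map between the free algebras of two classes (class of `t` to
class of `t`). -/
noncomputable def freeNatMap (C D : Set (Alg σ)) (k : ℕ) :
    (freeAlg C k).carrier → (freeAlg D k).carrier :=
  fun q => Quot.mk _ q.out

/-- The natural map `Clo(A) → Clo(B)`, sending `t^A` to `t^B`. -/
noncomputable def cloNatMap (A B : Alg σ) (k : ℕ) : CloK A k → CloK B k :=
  fun g => ⟨termOp B (Classical.choose g.2), Classical.choose g.2, rfl⟩

/-- The variety generated by `A`. -/
def varietyGen (A : Alg σ) : Set (Alg σ) :=
  {B | ∀ V : Set (Alg σ), IsVariety V → A ∈ V → B ∈ V}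

/-- The pseudovariety generated by `A`: the smallest class containing `A` closed
under finite products, subalgebras and homomorphic images. -/
def psvGen (A : Alg σ) : Set (Alg σ) :=
  {B | ∀ C : Set (Alg σ), A ∈ C → Hcl C ⊆ C → Scl C ⊆ C → Pfcl C ⊆ C → B ∈ C}

/-- The pseudovariety of finitely generated algebras generated by `A`: the finitely
generated members of the pseudovariety generated by `A`. -/
def psvFgGen (A : Alg σ) : Set (Alg σ) := {B | FinGen B ∧ B ∈ psvGen A}

/-! An isomorphism `φ : F_k/ψ ≅ F_l/θ` exhibits `θ` as an inverse substitution of `ψ`: choose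
`tᵢ ∈ F_k` with `φ [tᵢ]_ψ = [xᵢ]_θ`; as `φ ∘ π_ψ` is a homomorphism it sends `[s(t̄)]` to
`[s]_θ`, so by injectivity of `φ` we get `θ = ψ/t̄`. Closure of `B` under inverse substitution
then puts `θ` in `B_l`. -/

namespace IsHom

variable {A B C : Alg σ}

theorem comp {f : A.carrier → B.carrier} {g : B.carrier → C.carrier}
    (hf : IsHom A B f) (hg : IsHom B C g) : IsHom A C (g ∘ f) := fun F x => by
  simp only [Function.comp_apply, hf F x, hg F]

theorem map_eval {h : A.carrier → B.carrier} (hh : IsHom A B h) {n : ℕ}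
    (v : Fin n → A.carrier) (u : Trm σ n) : h (u.eval A v) = u.eval B (h ∘ v) := by
  induction u with
  | var i => rfl
  | app f ts ih =>
    change h (A.op f fun i => (ts i).eval A v) = B.op f fun i => (ts i).eval B (h ∘ v)
    rw [hh f]
    exact congrArg _ (funext ih)

end IsHom

theorem Isomorphic.trans {A B C : Alg σ} : Isomorphic A B → Isomorphic B C → Isomorphic A C
  | ⟨f, hf, hfb⟩, ⟨g, hg, hgb⟩ => ⟨g ∘ f, hf.comp hg, hgb.comp hfb⟩

theorem Isomorphic.refl (A : Alg σ) : Isomorphic A A :=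
  ⟨id, fun _ _ => rfl, Function.bijective_id⟩

namespace Cong

variable {A : Alg σ}

theorem ext {θ θ' : Cong A} (h : θ.r = θ'.r) : θ = θ' := by
  cases θ; cases θ'; cases h; rfl

theorem mk_eq_mk_iff (θ : Cong A) {a b : A.carrier} :
    Quot.mk θ.r a = Quot.mk θ.r b ↔ θ.r a b :=
  ⟨fun h => θ.iscon.1.eqvGen_iff.mp (Quot.eq.mp h), Quot.sound⟩

theorem isHom_mk (θ : Cong A) : IsHom A (quotAlg A θ.r) (Quot.mk θ.r) := fun f _ =>
  Quot.sound <| θ.iscon.2 f _ _ fun _ => θ.iscon.1.symm (θ.mk_eq_mk_iff.mp (Quot.out_eq _))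

end Cong

theorem freeCon_equivalence (C : Set (Alg σ)) (n : ℕ) : Equivalence (FreeCon C n) where
  refl _ _ _ _ := rfl
  symm h A hA v := (h A hA v).symm
  trans h h' A hA v := (h A hA v).trans (h' A hA v)

theorem freeAlg_eval_var (C : Set (Alg σ)) (k : ℕ) (u : Trm σ (k + 1)) :
    u.eval (freeAlg C k) (fun i => Quot.mk _ (Trm.var i)) = Quot.mk _ u := by
  induction u with
  | var i => rfl
  | app f ts ih =>
    change Quot.mk _ (Trm.app f fun i => (Trm.eval (freeAlg C k) _ (ts i)).out) = _
    simp only [ih]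
    refine Quot.sound fun A hA v => congrArg (A.op f) <| funext fun i => ?_
    exact (freeCon_equivalence C _).eqvGen_iff.mp (Quot.eq.mp (Quot.out_eq _)) A hA v

theorem IsHom.apply_freeAlg_eq_eval {C : Set (Alg σ)} {k : ℕ} {D : Alg σ}
    {g : (freeAlg C k).carrier → D.carrier} (hg : IsHom (freeAlg C k) D g)
    (s : (freeAlg C k).carrier) :
    g s = s.out.eval D fun i => g (Quot.mk _ (Trm.var i)) := by
  conv_lhs => rw [← Quot.out_eq s, ← freeAlg_eval_var]
  exact hg.map_eval _ _

theorem Isomorphic.exists_eq_conSubstRel {V : Set (Alg σ)} {k l : ℕ}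
    {ψ : Cong (freeAlg V k)} {θ : Cong (freeAlg V l)}
    (hiso : Isomorphic (quotAlg (freeAlg V k) ψ.r) (quotAlg (freeAlg V l) θ.r)) :
    ∃ t : Fin (l + 1) → (freeAlg V k).carrier, θ.r = conSubstRel ψ t := by
  obtain ⟨φ, hφ, hφ_inj, hφ_surj⟩ := hiso
  choose t hgen using fun i : Fin (l + 1) =>
    (hφ_surj.comp Quot.mk_surjective) (Quot.mk θ.r (Quot.mk _ (Trm.var i)))
  have hsubst : ∀ s, φ (Quot.mk ψ.r (s.out.eval (freeAlg V k) t)) = Quot.mk θ.r s := fun s => by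
    refine ((ψ.isHom_mk.comp hφ).map_eval t s.out).trans ?_
    rw [θ.isHom_mk.apply_freeAlg_eq_eval s]
    exact congrArg (Trm.eval _ · _) (funext hgen)
  refine ⟨t, funext₂ fun s s' => propext ?_⟩
  calc θ.r s s' ↔ Quot.mk θ.r s = Quot.mk θ.r s' := θ.mk_eq_mk_iff.symm
    _ ↔ φ (Quot.mk ψ.r (s.out.eval (freeAlg V k) t)) =
        φ (Quot.mk ψ.r (s'.out.eval (freeAlg V k) t)) := by rw [hsubst, hsubst]; exact Iff.rfl
    _ ↔ conSubstRel ψ t s s' := hφ_inj.eq_iff.trans ψ.mk_eq_mk_iff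

theorem mem_BK_KB_iff {V : Set (Alg σ)} {B : ∀ k : ℕ, Set (Cong (freeAlg V k))} {l : ℕ}
    {θ : Cong (freeAlg V l)} :
    θ ∈ BK V (KB V B) l ↔
      ∃ k, ∃ ψ ∈ B k, Isomorphic (quotAlg (freeAlg V k) ψ.r) (quotAlg (freeAlg V l) θ.r) := by
  constructor
  · rintro ⟨A, ⟨_, ⟨k, ψ, hψ, rfl⟩, hψA⟩, hAθ⟩
    exact ⟨k, ψ, hψ, hψA.trans hAθ⟩
  · rintro ⟨k, ψ, hψ, hψθ⟩
    exact ⟨_, ⟨_, ⟨k, ψ, hψ, rfl⟩, Isomorphic.refl _⟩, hψθ⟩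

theorem BKKB_eq_general {σ : Signature} (V : Set (Alg σ))
    (B : ∀ k : ℕ, Set (Cong (freeAlg V k))) (hB : InvSubstClosed V B) :
    ∀ l : ℕ, BK V (KB V B) l = B l := by
  intro l
  ext θ
  rw [mem_BK_KB_iff]
  constructor
  · rintro ⟨k, ψ, hψ, hiso⟩
    obtain ⟨t, hθ⟩ := hiso.exists_eq_conSubstRel
    obtain ⟨θ', hθ', hθ'_eq⟩ := hB k l ψ hψ t
    rwa [Cong.ext (hθ.trans hθ'_eq.symm)]
  · exact fun hθ => ⟨l, θ, hθ, Isomorphic.refl _⟩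

/-- If `B` is closed under inverse substitution then
`B^{K^B} = B`: every congruence `θ` of `F_l^V` whose quotient is isomorphic to a
quotient `F_k^V/ψ` with `ψ ∈ B_k` already belongs to `B_l`. -/
theorem BKKB_eq {σ : Signature} (V : Set (Alg σ)) (hV : IsVariety V)
    (B : ∀ k : ℕ, Set (Cong (freeAlg V k))) (hB : InvSubstClosed V B) :
    ∀ l : ℕ, BK V (KB V B) l = B l :=
  BKKB_eq_general V B hB
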